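/- Let M ≥ 1, κ ∈ (0,1], and b, cnf : {1,…,M} → ℝ satisfy: b nonnegative and monotonically nondecreasing, cnf nonnegative with κ·cnf(i) ≤ cnf(i+1) ≤ cnf(i) for all i ∈ {1,…,M−1}, and b(1) ≤ cnf(1). Define ĩ := max{ i : b(i) ≤ cnf(i) }. Then cnf(ĩ) ≤ (1 + κ⁻¹) · min_{i ∈ {1,…,M}} ( b(i) + cnf(i) ). -/

import Mathlib

/-!
If `i ≤ ĩ`, then `cnf ĩ ≤ cnf i` because `cnf` is nonincreasing. If `ĩ < i`, maximality of `ĩ`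
gives `cnf (ĩ + 1) < b (ĩ + 1)`, so the geometric decay and the monotonicity of `b` yield
`κ * cnf ĩ ≤ cnf (ĩ + 1) < b (ĩ + 1) ≤ b i`. In either case `cnf ĩ ≤ cnf i + κ⁻¹ * b i`.
-/

lemma monotoneOn_Icc_of_le_add_one {β : Type*} [Preorder β] {M : ℕ} {f : ℕ → β}
    (hf : ∀ i ∈ Finset.Icc 1 (M - 1), f i ≤ f (i + 1)) : MonotoneOn f (Set.Icc 1 M) :=
  monotoneOn_of_le_add_one Set.ordConnected_Icc fun a _ ha ha' =>
    hf a (Finset.mem_Icc.2 ⟨ha.1, by have := ha'.2; omega⟩)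

lemma antitoneOn_Icc_of_add_one_le {β : Type*} [Preorder β] {M : ℕ} {f : ℕ → β}
    (hf : ∀ i ∈ Finset.Icc 1 (M - 1), f (i + 1) ≤ f i) : AntitoneOn f (Set.Icc 1 M) :=
  monotoneOn_Icc_of_le_add_one (β := βᵒᵈ) hf

lemma le_one_add_inv_mul_add {κ b c x : ℝ} (hκ : 0 < κ) (hb : 0 ≤ b) (hc : 0 ≤ c)
    (h : x ≤ c ∨ κ * x ≤ b) : x ≤ (1 + κ⁻¹) * (b + c) := by
  have hκinv : 0 ≤ κ⁻¹ := inv_nonneg.2 hκ.le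
  have hx : x ≤ c + κ⁻¹ * b := h.elim
    (fun h => le_add_of_le_of_nonneg h (mul_nonneg hκinv hb))
    (fun h => le_add_of_nonneg_of_le hc ((le_inv_mul_iff₀ hκ).2 h))
  linarith [mul_nonneg hκinv hc]

lemma mul_le_of_maximal_of_lt {M : ℕ} {κ : ℝ} {b cnf : ℕ → ℝ}
    (hb : MonotoneOn b (Set.Icc 1 M))
    (hdecay : ∀ i ∈ Finset.Icc 1 (M - 1), κ * cnf i ≤ cnf (i + 1))
    {itilde : ℕ} (hitilde_mem : itilde ∈ Finset.Icc 1 M)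
    (hitilde_max : ∀ i ∈ Finset.Icc 1 M, b i ≤ cnf i → i ≤ itilde)
    {i : ℕ} (hi : i ∈ Finset.Icc 1 M) (hlt : itilde < i) : κ * cnf itilde ≤ b i := by
  rw [Finset.mem_Icc] at hi hitilde_mem
  have hnext : itilde + 1 ∈ Finset.Icc 1 M := Finset.mem_Icc.2 ⟨by omega, by omega⟩
  have hcross : cnf (itilde + 1) < b (itilde + 1) :=
    lt_of_not_ge fun h => by have := hitilde_max _ hnext h; omega
  calc κ * cnf itilde ≤ cnf (itilde + 1) := hdecay _ (Finset.mem_Icc.2 ⟨hitilde_mem.1, by omega⟩)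
    _ ≤ b (itilde + 1) := hcross.le
    _ ≤ b i := hb (Finset.mem_Icc.1 hnext) hi hlt

theorem slope_second_step_general
    (M : ℕ) (κ : ℝ) (hκ0 : 0 < κ)
    (b cnf : ℕ → ℝ)
    (hb_nonneg : ∀ i ∈ Finset.Icc 1 M, 0 ≤ b i)
    (hb_mono : ∀ i ∈ Finset.Icc 1 (M - 1), b i ≤ b (i + 1))
    (hcnf_nonneg : ∀ i ∈ Finset.Icc 1 M, 0 ≤ cnf i)
    (hcnf_mono : ∀ i ∈ Finset.Icc 1 (M - 1),
      κ * cnf i ≤ cnf (i + 1) ∧ cnf (i + 1) ≤ cnf i)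
    (itilde : ℕ) (hitilde_mem : itilde ∈ Finset.Icc 1 M)
    (hitilde_max : ∀ i ∈ Finset.Icc 1 M, b i ≤ cnf i → i ≤ itilde) :
    ∀ i ∈ Finset.Icc 1 M, cnf itilde ≤ (1 + κ⁻¹) * (b i + cnf i) := by
  intro i hi
  refine le_one_add_inv_mul_add hκ0 (hb_nonneg i hi) (hcnf_nonneg i hi) ?_
  rcases le_or_gt i itilde with hle | hlt
  · exact .inl <| antitoneOn_Icc_of_add_one_le (fun j hj => (hcnf_mono j hj).2)
      (Finset.mem_Icc.1 hi) (Finset.mem_Icc.1 hitilde_mem) hle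
  · exact .inr <| mul_le_of_maximal_of_lt (monotoneOn_Icc_of_le_add_one hb_mono)
      (fun j hj => (hcnf_mono j hj).1) hitilde_mem hitilde_max hi hlt

/-- **Second step of the SLOPE oracle-inequality proof.**
For a nonnegative nondecreasing bias bound `b` and a nonnegative confidence bound `cnf`
with geometric decay constant `κ ∈ (0,1]` (i.e. `κ * cnf i ≤ cnf (i+1) ≤ cnf i`), and
`b 1 ≤ cnf 1`, the confidence width at the bias-variance balancing index
`itilde = max { i : b i ≤ cnf i }` satisfies
`cnf itilde ≤ (1 + κ⁻¹) * min_i (b i + cnf i)`. -/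
theorem slope_second_step
    (M : ℕ) (hM : 1 ≤ M) (κ : ℝ) (hκ0 : 0 < κ) (hκ1 : κ ≤ 1)
    (b cnf : ℕ → ℝ)
    (hb_nonneg : ∀ i ∈ Finset.Icc 1 M, 0 ≤ b i)
    (hb_mono : ∀ i ∈ Finset.Icc 1 (M - 1), b i ≤ b (i + 1))
    (hcnf_nonneg : ∀ i ∈ Finset.Icc 1 M, 0 ≤ cnf i)
    (hcnf_mono : ∀ i ∈ Finset.Icc 1 (M - 1),
      κ * cnf i ≤ cnf (i + 1) ∧ cnf (i + 1) ≤ cnf i)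
    (hb1 : b 1 ≤ cnf 1)
    (itilde : ℕ) (hitilde_mem : itilde ∈ Finset.Icc 1 M)
    (hitilde_prop : b itilde ≤ cnf itilde)
    (hitilde_max : ∀ i ∈ Finset.Icc 1 M, b i ≤ cnf i → i ≤ itilde) :
    ∀ i ∈ Finset.Icc 1 M, cnf itilde ≤ (1 + κ⁻¹) * (b i + cnf i) :=
  slope_second_step_general M κ hκ0 b cnf hb_nonneg hb_mono hcnf_nonneg hcnf_mono itilde hitilde_mem
    hitilde_max
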